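/- Let (X,d) be a metric space, n ≥ 3, and T : X → X a mapping contracting total pairwise distance on n points with constant α ∈ [0,1). If x₁,...,x_{n−1} are pairwise distinct periodic points of T, and k is a common multiple of their prime periods, then S(x₁,...,x_{n−1}) remains unchanged under T^k applied coordinatewise; moreover, if additionally xₙ is a periodic point distinct from x₁,...,x_{n−1} with T^k(xₙ) = xₙ, then S(x₁,...,xₙ) ≤ α^k·S(x₁,...,xₙ), forcing S(x₁,...,xₙ) = 0, a contradiction. Hence T has at most n−1 periodic points. -/

import Mathlib

/-!
Iterating the contraction `m` times scales the total pairwise distance of an injective tuple by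
at most `αᵐ`, as long as every iterate of the tuple stays injective. For a tuple of periodic points
with common period `k` this is automatic, since `T^[k]` restricted to the `k`-periodic points is a
bijection; and after `k` steps the tuple returns to itself, so `S ≤ αᵏ S` with `αᵏ < 1` forces
`S = 0`, which is impossible for `n ≥ 2` distinct points.
-/

noncomputable def totalS {X : Type*} [MetricSpace X] {n : ℕ} (x : Fin n → X) : ℝ :=
  ∑ i : Fin n, ∑ j ∈ Finset.Ioi i, dist (x i) (x j)

open Function

section TotalS

variable {X : Type*} [MetricSpace X] {n : ℕ}

theorem totalS_nonneg (x : Fin n → X) : 0 ≤ totalS x :=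
  Finset.sum_nonneg fun _ _ => Finset.sum_nonneg fun _ _ => dist_nonneg

theorem dist_le_totalS (x : Fin n → X) {i j : Fin n} (hij : i < j) :
    dist (x i) (x j) ≤ totalS x :=
  calc dist (x i) (x j) ≤ ∑ j ∈ Finset.Ioi i, dist (x i) (x j) :=
        Finset.single_le_sum (f := fun j => dist (x i) (x j)) (fun _ _ => dist_nonneg)
          (Finset.mem_Ioi.mpr hij)
    _ ≤ totalS x :=
        Finset.single_le_sum (f := fun i => ∑ j ∈ Finset.Ioi i, dist (x i) (x j))
          (fun _ _ => Finset.sum_nonneg fun _ _ => dist_nonneg) (Finset.mem_univ i)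

theorem totalS_pos {x : Fin n → X} (hx : Injective x) (hn : 1 < n) : 0 < totalS x := by
  have h01 : (⟨0, by omega⟩ : Fin n) < ⟨1, hn⟩ := Fin.mk_lt_mk.mpr Nat.zero_lt_one
  exact (dist_pos.mpr (hx.ne h01.ne)).trans_le (dist_le_totalS x h01)

end TotalS

theorem Function.Injective.iterate_comp_of_isPeriodicPt {X ι : Type*} {T : X → X} {x : ι → X}
    {k : ℕ} (hx : Injective x) (hk : 0 < k) (hper : ∀ i, IsPeriodicPt T k (x i)) (m : ℕ) :
    Injective (T^[m] ∘ x) :=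
  fun i j h => hx (((bijOn_ptsOfPeriod T hk).iterate m).injOn (hper i) (hper j) h)

theorem exists_common_period {X ι : Type*} [Fintype ι] {T : X → X} {x : ι → X}
    (hper : ∀ i, ∃ p : ℕ, 0 < p ∧ IsPeriodicPt T p (x i)) :
    ∃ k : ℕ, 0 < k ∧ ∀ i, IsPeriodicPt T k (x i) := by
  choose p hp hperp using hper
  refine ⟨∏ i, p i, Finset.prod_pos fun i _ => hp i, fun i => ?_⟩
  obtain ⟨c, hc⟩ := Finset.dvd_prod_of_mem p (Finset.mem_univ i)
  rw [hc]
  exact (hperp i).mul_const c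

section Contraction

variable {X : Type*} [MetricSpace X] {n : ℕ} {T : X → X} {α : ℝ}
  (hT : ∀ x : Fin n → X, Injective x → totalS (T ∘ x) ≤ α * totalS x)
include hT

theorem totalS_iterate_comp_le (hα : 0 ≤ α) {x : Fin n → X} (hx : ∀ m, Injective (T^[m] ∘ x))
    (m : ℕ) : totalS (T^[m] ∘ x) ≤ α ^ m * totalS x := by
  induction m with
  | zero => simp
  | succ m ih =>
    calc totalS (T^[m + 1] ∘ x) = totalS (T ∘ T^[m] ∘ x) := by
          rw [iterate_succ', comp_assoc]
      _ ≤ α * totalS (T^[m] ∘ x) := hT _ (hx m)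
      _ ≤ α * (α ^ m * totalS x) := mul_le_mul_of_nonneg_left ih hα
      _ = α ^ (m + 1) * totalS x := by ring

theorem totalS_le_pow_mul_of_isPeriodicPt (hα : 0 ≤ α) {x : Fin n → X} (hx : Injective x)
    {k : ℕ} (hk : 0 < k) (hper : ∀ i, IsPeriodicPt T k (x i)) :
    totalS x ≤ α ^ k * totalS x := by
  have hreturn : T^[k] ∘ x = x := funext hper
  simpa only [hreturn] using
    totalS_iterate_comp_le hT hα (hx.iterate_comp_of_isPeriodicPt hk hper) k

theorem totalS_eq_zero_of_isPeriodicPt (hα0 : 0 ≤ α) (hα1 : α < 1) {x : Fin n → X}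
    (hx : Injective x) {k : ℕ} (hk : 0 < k) (hper : ∀ i, IsPeriodicPt T k (x i)) :
    totalS x = 0 := by
  have hle := totalS_le_pow_mul_of_isPeriodicPt hT hα0 hx hk hper
  have hαk : α ^ k < 1 := pow_lt_one₀ hα0 hα1 hk.ne'
  nlinarith [totalS_nonneg x]

end Contraction

theorem stmt_17 {X : Type*} [MetricSpace X] (n : ℕ) (hn : 3 ≤ n)
    (T : X → X) (α : ℝ) (hα0 : 0 ≤ α) (hα1 : α < 1)
    (hT : ∀ x : Fin n → X, Function.Injective x → totalS (T ∘ x) ≤ α * totalS x) :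
    (∀ x : Fin (n - 1) → X, Function.Injective x →
      (∀ i, ∃ p : ℕ, 0 < p ∧ T^[p] (x i) = x i) →
      ∀ k : ℕ, (∀ i, T^[k] (x i) = x i) →
        totalS (fun i => T^[k] (x i)) = totalS x) ∧
    (∀ x : Fin n → X, Function.Injective x →
      (∀ i, ∃ p : ℕ, 0 < p ∧ T^[p] (x i) = x i) →
      ∀ k : ℕ, 0 < k → (∀ i, T^[k] (x i) = x i) →
        totalS x ≤ α ^ k * totalS x ∧ totalS x = 0) ∧
    ¬∃ x : Fin n → X, Function.Injective x ∧
      ∀ i, ∃ p : ℕ, 0 < p ∧ T^[p] (x i) = x i := by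
  refine ⟨fun x _ _ k hk => congrArg totalS (funext hk), fun x hx _ k hk hper =>
    ⟨totalS_le_pow_mul_of_isPeriodicPt hT hα0 hx hk hper,
      totalS_eq_zero_of_isPeriodicPt hT hα0 hα1 hx hk hper⟩, ?_⟩
  rintro ⟨x, hx, hper⟩
  obtain ⟨k, hk, hperk⟩ := exists_common_period hper
  exact (totalS_pos hx (by omega)).ne' (totalS_eq_zero_of_isPeriodicPt hT hα0 hα1 hx hk hperk)
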